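/- arXiv:2010.07175 — 2 statements merged into one kernel-verified Lean document; each statement's English description precedes it below -/
import Mathlib

section
/- Let δ be a unit of R = F_{p^m}[v]/⟨v^3 - v⟩ with δ = λ₀η₀ + λ₁η₁ + λ₂η₂, and let σ be the automorphism of R extending Θ ∈ Aut(F_{p^m}). A linear code C = η₀A₀ ⊕ η₁A₁ ⊕ η₂A₂ of length n over R is skew (σ, δ)-constacyclic if and only if each A_i is a skew (Θ, λ_i)-constacyclic code over F_{p^m}, for i = 0, 1, 2. -/
open Polynomial

set_option synthInstance.maxHeartbeats 1000000
set_option maxHeartbeats 1000000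

noncomputable section

/-- The ring `R = F[v]/⟨v^3 - v⟩`. -/
abbrev Rq (F : Type) [Field F] : Type :=
  Polynomial F ⧸ Ideal.span {(X : Polynomial F) ^ 3 - X}

/-- The image of `v` in `R`. -/
def vR (F : Type) [Field F] : Rq F := Ideal.Quotient.mk _ X

/-- The orthogonal idempotents `η₀ = 1 - v²`, `η₁ = ζ(v² + v)`, `η₂ = ζ(v² - v)`
with `ζ = 2⁻¹`. -/
def eta (F : Type) [Field F] : Fin 3 → Rq F :=
  ![1 - vR F ^ 2,
    algebraMap F (Rq F) (2 : F)⁻¹ * (vR F ^ 2 + vR F),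
    algebraMap F (Rq F) (2 : F)⁻¹ * (vR F ^ 2 - vR F)]

/-- A code `C` of length `n` over `S` is skew `(σ, δ)`-constacyclic if it is closed
under the shift `(c₀, …, c_{n-1}) ↦ (σ(δ c_{n-1}), σ(c₀), …, σ(c_{n-2}))`. -/
def IsSkewConstacyclic {S : Type} [CommRing S] {n : ℕ} [NeZero n]
    (σ : RingAut S) (δ : S) (C : Set (Fin n → S)) : Prop :=
  ∀ c ∈ C, (fun i : Fin n => σ ((if i = 0 then δ else 1) * c (i - 1))) ∈ C

/-! For `2 ≠ 0` the ring `R = F[X]/(X³ - X)` is `F × F × F` by the Chinese remainder theorem,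
with the evaluations at the roots `0, 1, -1` as projections and `η₀, η₁, η₂` as the corresponding
idempotents. Writing a word of `C` as `∑ ηⱼ yⱼ`, multiplication by `δ` acts on the `j`-th
component as multiplication by `λⱼ = δ(rootⱼ)`, and `σ` fixes the `ηⱼ` and acts as `Θ` on
the components. Hence the skew shift of `C` is the componentwise skew shift, and since the
decomposition is unique, `C` is closed under it iff every `Aⱼ` is. -/

theorem Set.mapsTo_image_univ_pi_iff {ι M N : Type*} {D : (ι → M) → N}
    (hD : Function.Injective D) {T : N → N} {T' : ι → M → M}
    (hT : ∀ y, T (D y) = D fun j => T' j (y j)) {A : ι → Set M} (hA : ∀ j, (A j).Nonempty) :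
    Set.MapsTo T (D '' Set.univ.pi A) (D '' Set.univ.pi A) ↔
      ∀ j, Set.MapsTo (T' j) (A j) (A j) := by
  classical
  constructor
  · intro h i a ha
    obtain ⟨y₀, hy₀⟩ : (Set.univ.pi A).Nonempty := Set.univ_pi_nonempty_iff.2 hA
    have hy : Function.update y₀ i a ∈ Set.univ.pi A :=
      (Set.update_mem_pi_iff_of_mem hy₀).2 fun _ => ha
    obtain ⟨z, hz, hDz⟩ := h (Set.mem_image_of_mem D hy)
    rw [hT] at hDz
    have hzi := congrFun (hD hDz) i
    simp only [Function.update_self] at hzi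
    exact hzi ▸ hz i (Set.mem_univ i)
  · rintro h _ ⟨y, hy, rfl⟩
    rw [hT]
    exact Set.mem_image_of_mem D fun j _ => h j (hy j (Set.mem_univ j))

theorem two_ne_zero_of_odd_card {F : Type*} [Field F] [Fintype F] (h : Odd (Fintype.card F)) :
    (2 : F) ≠ 0 :=
  Ring.two_ne_zero fun hchar => by
    simp [Nat.odd_iff, FiniteField.even_card_iff_char_two.1 hchar] at h

def skewShift {S : Type} [CommRing S] {n : ℕ} [NeZero n] (σ : RingAut S) (δ : S)
    (c : Fin n → S) : Fin n → S :=
  fun i => σ ((if i = 0 then δ else 1) * c (i - 1))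

theorem isSkewConstacyclic_iff_mapsTo {S : Type} [CommRing S] {n : ℕ} [NeZero n]
    (σ : RingAut S) (δ : S) (C : Set (Fin n → S)) :
    IsSkewConstacyclic σ δ C ↔ Set.MapsTo (skewShift σ δ) C C :=
  Iff.rfl

variable {F : Type} [Field F]

theorem vR_pow_three : vR F ^ 3 = vR F := by
  rw [← sub_eq_zero, vR, ← map_pow, ← map_sub, Ideal.Quotient.eq_zero_iff_mem]
  exact Ideal.subset_span rfl

def rootX3 : Fin 3 → F := ![0, 1, -1]

theorem rootX3_pow_three (i : Fin 3) : rootX3 i ^ 3 = (rootX3 i : F) := by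
  fin_cases i <;> norm_num [rootX3]

def evalRoot (i : Fin 3) : Rq F →ₐ[F] F :=
  Ideal.Quotient.liftₐ _ (aeval (rootX3 i)) fun f hf => by
    obtain ⟨g, rfl⟩ := Ideal.mem_span_singleton'.1 hf
    simp [rootX3_pow_three]

@[simp]
theorem evalRoot_mk (i : Fin 3) (f : F[X]) :
    evalRoot i (Ideal.Quotient.mk _ f) = f.eval (rootX3 i) := by
  simp [evalRoot, Ideal.Quotient.liftₐ_apply]

@[simp]
theorem evalRoot_vR (i : Fin 3) : evalRoot i (vR F) = rootX3 i := by
  simp [vR]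

theorem evalRoot_eta (h2 : (2 : F) ≠ 0) (i j : Fin 3) :
    evalRoot i (eta F j) = if j = i then 1 else 0 := by
  fin_cases i <;> fin_cases j <;> simp [_root_.eta, rootX3] <;> field_simp <;> norm_num

theorem evalRoot_delta (α β γ : F) (i : Fin 3) :
    evalRoot i (algebraMap F (Rq F) α + algebraMap F (Rq F) β * vR F +
      algebraMap F (Rq F) γ * vR F ^ 2) = ![α, α + β + γ, α - β + γ] i := by
  simp only [map_add, map_mul, map_pow, AlgHom.commutes, Algebra.algebraMap_self,
    RingHom.id_apply, evalRoot_vR]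
  fin_cases i <;> simp [rootX3, sub_eq_add_neg]

theorem vR_mul_eta (j : Fin 3) : vR F * eta F j = eta F j * algebraMap F (Rq F) (rootX3 j) := by
  have hv := vR_pow_three (F := F)
  fin_cases j <;>
    simp only [_root_.eta, rootX3, Fin.zero_eta, Fin.mk_one, Fin.reduceFinMk, Matrix.cons_val,
      map_zero, map_one, map_neg, mul_zero, mul_one, Fin.isValue]
  · linear_combination -hv
  · linear_combination algebraMap F (Rq F) 2⁻¹ * hv
  · linear_combination algebraMap F (Rq F) 2⁻¹ * hv

theorem mul_eta (x : Rq F) (j : Fin 3) :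
    x * eta F j = eta F j * algebraMap F (Rq F) (evalRoot j x) := by
  obtain ⟨f, rfl⟩ := Ideal.Quotient.mk_surjective x
  induction f using Polynomial.induction_on with
  | C a => exact (mul_comm _ _).trans (by simp [← Ideal.Quotient.mk_algebraMap])
  | add f g hf hg => simp only [map_add, add_mul, hf, hg, mul_add]
  | monomial k a ih =>
    have hmk : Ideal.Quotient.mk _ (C a * X ^ (k + 1)) =
        Ideal.Quotient.mk (Ideal.span {(X : F[X]) ^ 3 - X}) (C a * X ^ k) * vR F := by
      rw [pow_succ (X : F[X]) k, ← mul_assoc, map_mul]; rfl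
    rw [hmk, mul_assoc, vR_mul_eta, ← mul_assoc, ih, mul_assoc, ← map_mul, map_mul (evalRoot j),
      evalRoot_vR]

theorem map_eta_of_comp_algebraMap {Θ : RingAut F} {σ : RingAut (Rq F)}
    (hσF : ∀ a, σ (algebraMap F (Rq F) a) = algebraMap F (Rq F) (Θ a)) (hσv : σ (vR F) = vR F)
    (j : Fin 3) : σ (eta F j) = eta F j := by
  fin_cases j <;> simp [_root_.eta, hσF, hσv, map_ofNat]

variable {n : ℕ}

def etaSum (y : Fin 3 → Fin n → F) : Fin n → Rq F :=
  fun t => ∑ j, eta F j * algebraMap F (Rq F) (y j t)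

@[simp]
theorem evalRoot_etaSum (h2 : (2 : F) ≠ 0) (y : Fin 3 → Fin n → F) (i : Fin 3) (t : Fin n) :
    evalRoot i (etaSum y t) = y i t := by
  simp [etaSum, evalRoot_eta h2]

theorem etaSum_injective (h2 : (2 : F) ≠ 0) :
    Function.Injective (etaSum : (Fin 3 → Fin n → F) → Fin n → Rq F) := by
  intro y z h
  ext i t
  simpa [h2] using congrArg (evalRoot i) (congrFun h t)

theorem skewShift_etaSum {Θ : RingAut F} {σ : RingAut (Rq F)}
    (hσF : ∀ a, σ (algebraMap F (Rq F) a) = algebraMap F (Rq F) (Θ a)) (hσv : σ (vR F) = vR F)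
    [NeZero n] (δ : Rq F) (y : Fin 3 → Fin n → F) :
    skewShift σ δ (etaSum y) = etaSum fun j => skewShift Θ (evalRoot j δ) (y j) := by
  funext t
  simp only [skewShift, etaSum, Finset.mul_sum, map_sum]
  refine Finset.sum_congr rfl fun j _ => ?_
  rw [← mul_assoc, mul_eta, mul_assoc, ← map_mul, map_mul σ, map_eta_of_comp_algebraMap hσF hσv,
    hσF, apply_ite (evalRoot j), map_one]

theorem stmt10_general (p m n : ℕ) (hodd : Odd p) [NeZero n]
    (F : Type) [Field F] [Fintype F] (hF : Fintype.card F = p ^ m)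
    (Θ : RingAut F) (σ : RingAut (Rq F))
    (hσ : ∀ a b c : F,
      σ (algebraMap F (Rq F) a + algebraMap F (Rq F) b * vR F +
          algebraMap F (Rq F) c * vR F ^ 2) =
        algebraMap F (Rq F) (Θ a) + algebraMap F (Rq F) (Θ b) * vR F +
          algebraMap F (Rq F) (Θ c) * vR F ^ 2)
    (α β γ : F)
    (A : Fin 3 → Submodule F (Fin n → F))
    (C : Submodule (Rq F) (Fin n → Rq F))
    (hC : ∀ c, c ∈ C ↔ ∃ y : Fin 3 → Fin n → F, (∀ i, y i ∈ A i) ∧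
        c = fun t => ∑ j, eta F j * algebraMap F (Rq F) (y j t)) :
    IsSkewConstacyclic σ
        (algebraMap F (Rq F) α + algebraMap F (Rq F) β * vR F +
          algebraMap F (Rq F) γ * vR F ^ 2) (C : Set (Fin n → Rq F)) ↔
      ∀ i, IsSkewConstacyclic Θ (![α, α + β + γ, α - β + γ] i)
        (A i : Set (Fin n → F)) := by
  have h2 : (2 : F) ≠ 0 := two_ne_zero_of_odd_card (hF ▸ hodd.pow)
  have hσF : ∀ a, σ (algebraMap F (Rq F) a) = algebraMap F (Rq F) (Θ a) := fun a => by
    simpa using hσ a 0 0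
  have hσv : σ (vR F) = vR F := by simpa using hσ 0 1 0
  have hCimage :
      (C : Set (Fin n → Rq F)) = etaSum '' Set.univ.pi fun i => (A i : Set (Fin n → F)) := by
    ext c
    simp only [SetLike.mem_coe, hC, Set.mem_image, Set.mem_univ_pi, eq_comm (b := c)]
    rfl
  simp only [isSkewConstacyclic_iff_mapsTo, hCimage, ← evalRoot_delta]
  exact Set.mapsTo_image_univ_pi_iff (etaSum_injective h2) (skewShift_etaSum hσF hσv _)
    fun i => ⟨0, (A i).zero_mem⟩

theorem stmt10 (p m n : ℕ) (hp : p.Prime) (hodd : Odd p) (hm : 0 < m) [NeZero n]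
    (F : Type) [Field F] [Fintype F] (hF : Fintype.card F = p ^ m)
    (Θ : RingAut F) (σ : RingAut (Rq F))
    (hσ : ∀ a b c : F,
      σ (algebraMap F (Rq F) a + algebraMap F (Rq F) b * vR F +
          algebraMap F (Rq F) c * vR F ^ 2) =
        algebraMap F (Rq F) (Θ a) + algebraMap F (Rq F) (Θ b) * vR F +
          algebraMap F (Rq F) (Θ c) * vR F ^ 2)
    (α β γ : F)
    (hδu : IsUnit (algebraMap F (Rq F) α + algebraMap F (Rq F) β * vR F +
        algebraMap F (Rq F) γ * vR F ^ 2))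
    (A : Fin 3 → Submodule F (Fin n → F))
    (C : Submodule (Rq F) (Fin n → Rq F))
    (hC : ∀ c, c ∈ C ↔ ∃ y : Fin 3 → Fin n → F, (∀ i, y i ∈ A i) ∧
        c = fun t => ∑ j, eta F j * algebraMap F (Rq F) (y j t)) :
    IsSkewConstacyclic σ
        (algebraMap F (Rq F) α + algebraMap F (Rq F) β * vR F +
          algebraMap F (Rq F) γ * vR F ^ 2) (C : Set (Fin n → Rq F)) ↔
      ∀ i, IsSkewConstacyclic Θ (![α, α + β + γ, α - β + γ] i)
        (A i : Set (Fin n → F)) :=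
  stmt10_general p m n hodd F hF Θ σ hσ α β γ A C hC
end
end

section
/- Let F be a finite field, Θ ∈ Aut(F) with order dividing n, λ ∈ {1, -1}, and let A be a skew (Θ, λ)-constacyclic code of length n over F generated by monic f(x) with x^n - λ = h(x)f(x) in F[x;Θ]. Then A^⊥ ⊆ A if and only if h*(x)h(x) is right divisible by x^n - λ, where h*(x) = Σ_{j=0}^{k} Θ^j(h_{k-j}) x^j is the skew reciprocal polynomial of h(x) = Σ_{j=0}^{k} h_j x^j. -/
/-- Multiplication in the skew polynomial ring `S[x;σ]`, where polynomials are
represented as finitely supported coefficient functions `ℕ →₀ S` and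
`(a x^i) (b x^j) = a σ^i(b) x^{i+j}`. -/
noncomputable def skewMul {S : Type} [Ring S] (σ : RingAut S) (f g : ℕ →₀ S) : ℕ →₀ S :=
  f.sum fun i a => g.sum fun j b => Finsupp.single (i + j) (a * (σ ^ i) b)

/-- The Euclidean dual of a code, with respect to the standard bilinear form. -/
def dualSet {ι S : Type} [Fintype ι] [CommRing S] (C : Set (ι → S)) : Set (ι → S) :=
  {a | ∀ b ∈ C, ∑ t, a t * b t = 0}

/-- The polynomial (coefficient vector) associated to a codeword. -/
noncomputable def toPoly {S : Type} [Semiring S] {n : ℕ} (c : Fin n → S) : ℕ →₀ S :=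
  ∑ i : Fin n, Finsupp.single (i : ℕ) (c i)

/-- A polynomial is monic: it has a coefficient equal to `1` beyond which all
coefficients vanish. -/
def IsMonicPoly {S : Type} [Semiring S] (g : ℕ →₀ S) : Prop :=
  ∃ d, g d = 1 ∧ ∀ j, d < j → g j = 0

/-- The skew reciprocal polynomial `h*(x) = Σ_{j=0}^k Θ^j(h_{k-j}) x^j` of a
polynomial `h` of degree (at most) `k`. -/
noncomputable def skewRecip {S : Type} [Ring S] (Θ : RingAut S) (k : ℕ) (h : ℕ →₀ S) :
    ℕ →₀ S :=
  ∑ j ∈ Finset.range (k + 1), Finsupp.single j ((Θ ^ j) (h (k - j)))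

/-!
Since `x^n - λ` is central, `h f = x^n - λ` forces `f h = x^n - λ`, so the coefficients of `f h`
vanish in the degrees `1, …, n - 1`. With `m = deg h`, the dot product of the codewords of
`x^j f` (`j < m`) and `x^i h*` (`i < n - m`) is, up to `Θ^j`, the coefficient of `x^(m+i-j)` in
`f h`, hence zero. The code generated by `h*` has dimension `n - m = n - dim A`, so it is `A^⊥`.
Hence `A^⊥ ⊆ A` iff `h* ∈ F[x;Θ] f` iff `h* h ∈ F[x;Θ] f h = F[x;Θ] (x^n - λ)`. Passing from the
reciprocal taken at degree `k` to the one at degree `m` multiplies by `x^(k-m)`, which is harmless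
because `f(0) ≠ 0`.
-/

section SkewMul

variable {S : Type} [Ring S] (σ : RingAut S)

@[simp]
theorem zero_skewMul (q : ℕ →₀ S) : skewMul σ 0 q = 0 := by
  simp [skewMul]

@[simp]
theorem skewMul_zero (p : ℕ →₀ S) : skewMul σ p 0 = 0 := by
  simp [skewMul]

theorem add_skewMul (p p' q : ℕ →₀ S) :
    skewMul σ (p + p') q = skewMul σ p q + skewMul σ p' q := by
  refine Finsupp.sum_add_index (fun i _ => by simp) fun i _ a a' => ?_
  rw [← Finsupp.sum_add]
  exact Finsupp.sum_congr fun j _ => by rw [add_mul, Finsupp.single_add]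

theorem skewMul_add (p q q' : ℕ →₀ S) :
    skewMul σ p (q + q') = skewMul σ p q + skewMul σ p q' := by
  rw [skewMul, skewMul, skewMul, ← Finsupp.sum_add]
  refine Finsupp.sum_congr fun i _ => Finsupp.sum_add_index (fun j _ => by simp) fun j _ b b' => ?_
  rw [map_add, mul_add, Finsupp.single_add]

theorem sub_skewMul (p p' q : ℕ →₀ S) :
    skewMul σ (p - p') q = skewMul σ p q - skewMul σ p' q :=
  (AddMonoidHom.mk' (skewMul σ · q) fun p p' => add_skewMul σ p p' q).map_sub p p'

theorem skewMul_sub (p q q' : ℕ →₀ S) :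
    skewMul σ p (q - q') = skewMul σ p q - skewMul σ p q' :=
  (AddMonoidHom.mk' (skewMul σ p) (skewMul_add σ p)).map_sub q q'

theorem sum_skewMul {ι : Type} (s : Finset ι) (p : ι → ℕ →₀ S) (q : ℕ →₀ S) :
    skewMul σ (∑ i ∈ s, p i) q = ∑ i ∈ s, skewMul σ (p i) q :=
  map_sum (AddMonoidHom.mk' (skewMul σ · q) fun p p' => add_skewMul σ p p' q) p s

theorem single_skewMul_single (i j : ℕ) (a b : S) :
    skewMul σ (Finsupp.single i a) (Finsupp.single j b) =
      Finsupp.single (i + j) (a * (σ ^ i) b) := by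
  simp [skewMul]

theorem skewMul_assoc (p q r : ℕ →₀ S) :
    skewMul σ (skewMul σ p q) r = skewMul σ p (skewMul σ q r) := by
  induction p using Finsupp.induction_linear with
  | zero => simp
  | add p p' hp hp' => simp only [add_skewMul, hp, hp']
  | single i a =>
  induction q using Finsupp.induction_linear with
  | zero => simp
  | add q q' hq hq' => simp only [skewMul_add, add_skewMul, hq, hq']
  | single j b =>
  induction r using Finsupp.induction_linear with
  | zero => simp
  | add r r' hr hr' => simp only [skewMul_add, hr, hr']
  | single l c =>
  simp only [single_skewMul_single, map_mul, pow_add, RingAut.mul_apply, mul_assoc, add_assoc]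

theorem single_skewMul_apply (i : ℕ) (a : S) (q : ℕ →₀ S) (t : ℕ) :
    skewMul σ (Finsupp.single i a) q t = if i ≤ t then a * (σ ^ i) (q (t - i)) else 0 := by
  induction q using Finsupp.induction_linear with
  | zero => simp
  | add q q' hq hq' =>
    rw [skewMul_add, Finsupp.add_apply, hq, hq']
    split_ifs <;> simp [mul_add]
  | single j b =>
    rw [single_skewMul_single, Finsupp.single_apply, Finsupp.single_apply]
    split_ifs <;> first | omega | simp

theorem skewMul_single_apply (p : ℕ →₀ S) (j : ℕ) (b : S) (t : ℕ) :
    skewMul σ p (Finsupp.single j b) t =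
      if j ≤ t then p (t - j) * (σ ^ (t - j)) b else 0 := by
  induction p using Finsupp.induction_linear with
  | zero => simp
  | add p p' hp hp' =>
    rw [add_skewMul, Finsupp.add_apply, hp, hp']
    split_ifs <;> simp [add_mul]
  | single i a =>
    rw [single_skewMul_single, Finsupp.single_apply, Finsupp.single_apply]
    split_ifs <;> first | omega | simp_all

theorem skewMul_apply (p q : ℕ →₀ S) (t : ℕ) :
    skewMul σ p q t = ∑ i ∈ Finset.range (t + 1), p i * (σ ^ i) (q (t - i)) := by
  induction p using Finsupp.induction_linear with
  | zero => simp
  | add p p' hp hp' =>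
    simp only [add_skewMul, Finsupp.add_apply, hp, hp', add_mul, Finset.sum_add_distrib]
  | single i a =>
    simp only [single_skewMul_apply, Finsupp.single_apply, ite_mul, zero_mul, Finset.sum_ite_eq,
      Finset.mem_range, Nat.lt_succ_iff]

theorem one_skewMul (p : ℕ →₀ S) : skewMul σ (Finsupp.single 0 1) p = p := by
  ext t
  simp [single_skewMul_apply]

theorem skewMul_one (p : ℕ →₀ S) : skewMul σ p (Finsupp.single 0 1) = p := by
  ext t
  simp [skewMul_single_apply]

end SkewMul

section Commutative

variable {S : Type} [CommRing S] (σ : RingAut S)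

theorem smul_skewMul (a : S) (p q : ℕ →₀ S) :
    skewMul σ (a • p) q = a • skewMul σ p q := by
  ext t
  simp [skewMul_apply, Finset.mul_sum, mul_assoc]

theorem skewMul_single_comm {n : ℕ} {c : S} (hσn : σ ^ n = 1) (hc : σ c = c) (p : ℕ →₀ S) :
    skewMul σ p (Finsupp.single n c) = skewMul σ (Finsupp.single n c) p := by
  have hc' : ∀ i, (σ ^ i) c = c := fun i => by
    induction i with
    | zero => rfl
    | succ i ih => rw [pow_succ, RingAut.mul_apply, hc, ih]
  ext t
  rw [skewMul_single_apply, single_skewMul_apply, hc', hσn]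
  split_ifs <;> simp [mul_comm]

theorem skewMul_X_pow_sub_C_comm {n : ℕ} {lam : S} (hσn : σ ^ n = 1) (hlam : σ lam = lam)
    (p : ℕ →₀ S) :
    skewMul σ p (Finsupp.single n 1 - Finsupp.single 0 lam) =
      skewMul σ (Finsupp.single n 1 - Finsupp.single 0 lam) p := by
  rw [skewMul_sub, sub_skewMul, skewMul_single_comm σ hσn (map_one σ),
    skewMul_single_comm σ (pow_zero σ) hlam]

end Commutative

section Degree

variable {S : Type} [Ring S] (σ : RingAut S)

def natDeg (p : ℕ →₀ S) : ℕ := p.support.sup id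

theorem le_natDeg_of_ne_zero {p : ℕ →₀ S} {j : ℕ} (hj : p j ≠ 0) : j ≤ natDeg p :=
  Finset.le_sup (f := id) (Finsupp.mem_support_iff.mpr hj)

theorem apply_eq_zero_of_natDeg_lt {p : ℕ →₀ S} {j : ℕ} (hj : natDeg p < j) : p j = 0 :=
  not_not.mp fun h => (le_natDeg_of_ne_zero h).not_gt hj

theorem natDeg_le_iff {p : ℕ →₀ S} {D : ℕ} : natDeg p ≤ D ↔ ∀ j, D < j → p j = 0 :=
  ⟨fun h _ hj => apply_eq_zero_of_natDeg_lt (h.trans_lt hj),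
    fun h => Finset.sup_le fun j hj => not_lt.mp fun hDj => Finsupp.mem_support_iff.mp hj (h j hDj)⟩

theorem natDeg_eq_of_apply_ne_zero {p : ℕ →₀ S} {D : ℕ} (hp : ∀ j, D < j → p j = 0)
    (hD : p D ≠ 0) : natDeg p = D :=
  (natDeg_le_iff.mpr hp).antisymm (le_natDeg_of_ne_zero hD)

theorem apply_natDeg_ne_zero {p : ℕ →₀ S} (hp : p ≠ 0) : p (natDeg p) ≠ 0 := by
  obtain ⟨i, hi, hmax⟩ := Finset.exists_mem_eq_sup _ (Finsupp.support_nonempty_iff.mpr hp) id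
  rw [natDeg, hmax]
  exact Finsupp.mem_support_iff.mp hi

theorem skewMul_apply_eq_zero {p q : ℕ →₀ S} {P Q t : ℕ} (hp : ∀ j, P ≤ j → p j = 0)
    (hq : ∀ j, Q < j → q j = 0) (ht : P + Q ≤ t) : skewMul σ p q t = 0 := by
  rw [skewMul_apply]
  refine Finset.sum_eq_zero fun i _ => ?_
  by_cases hi : P ≤ i
  · simp [hp i hi]
  · simp [hq (t - i) (by omega)]

theorem skewMul_apply_add {p q : ℕ →₀ S} {P Q : ℕ} (hp : ∀ j, P < j → p j = 0)
    (hq : ∀ j, Q < j → q j = 0) : skewMul σ p q (P + Q) = p P * (σ ^ P) (q Q) := by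
  rw [skewMul_apply, Finset.sum_eq_single P]
  · rw [Nat.add_sub_cancel_left]
  · intro i _ hi
    rcases lt_or_gt_of_ne hi with hi | hi
    · simp [hq (P + Q - i) (by omega)]
    · simp [hp i hi]
  · simp

theorem exists_eq_single_one_skewMul {q : ℕ →₀ S} (hq : q 0 = 0) :
    ∃ q', q = skewMul σ (Finsupp.single 1 1) q' := by
  refine ⟨(q.comapDomain (· + 1) (add_left_injective 1).injOn).mapRange σ.symm (map_zero _), ?_⟩
  ext (_ | t)
  · simp [single_skewMul_apply, hq]
  · simp [single_skewMul_apply]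

theorem natDeg_X_pow_sub_C [Nontrivial S] {n : ℕ} (hn : n ≠ 0) (lam : S) :
    natDeg (Finsupp.single n 1 - Finsupp.single 0 lam) = n :=
  natDeg_eq_of_apply_ne_zero
    (fun j hj => by simp [hj.ne', ((Nat.pos_of_ne_zero hn).trans hj).ne']) (by simp [hn])

variable [IsDomain S]

theorem skewMul_apply_natDeg_add_ne_zero {p q : ℕ →₀ S} {Q : ℕ} (hp : p ≠ 0)
    (hq : ∀ j, Q < j → q j = 0) (hqQ : q Q ≠ 0) : skewMul σ p q (natDeg p + Q) ≠ 0 := by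
  rw [skewMul_apply_add σ (fun _ => apply_eq_zero_of_natDeg_lt) hq]
  exact mul_ne_zero (apply_natDeg_ne_zero hp) ((map_ne_zero_iff _ (σ ^ _).injective).mpr hqQ)

theorem natDeg_skewMul {p q : ℕ →₀ S} (hp : p ≠ 0) (hq : q ≠ 0) :
    natDeg (skewMul σ p q) = natDeg p + natDeg q :=
  natDeg_eq_of_apply_ne_zero
    (fun _ hj => skewMul_apply_eq_zero σ (P := natDeg p + 1)
      (fun _ hi => apply_eq_zero_of_natDeg_lt hi) (fun _ => apply_eq_zero_of_natDeg_lt) (by omega))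
    (skewMul_apply_natDeg_add_ne_zero σ hp (fun _ => apply_eq_zero_of_natDeg_lt)
      (apply_natDeg_ne_zero hq))

theorem skewMul_ne_zero {p q : ℕ →₀ S} (hp : p ≠ 0) (hq : q ≠ 0) : skewMul σ p q ≠ 0 :=
  fun h => skewMul_apply_natDeg_add_ne_zero σ hp (fun _ => apply_eq_zero_of_natDeg_lt)
    (apply_natDeg_ne_zero hq) (by rw [h, Finsupp.zero_apply])

theorem skewMul_left_cancel₀ {p q q' : ℕ →₀ S} (hp : p ≠ 0)
    (h : skewMul σ p q = skewMul σ p q') : q = q' := by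
  by_contra hne
  exact skewMul_ne_zero σ hp (sub_ne_zero.mpr hne) (by rw [skewMul_sub, h, sub_self])

theorem skewMul_right_cancel₀ {p p' q : ℕ →₀ S} (hq : q ≠ 0)
    (h : skewMul σ p q = skewMul σ p' q) : p = p' := by
  by_contra hne
  exact skewMul_ne_zero σ (sub_ne_zero.mpr hne) hq (by rw [sub_skewMul, h, sub_self])

theorem exists_eq_skewMul_of_single_skewMul_eq {e : ℕ} {p q f : ℕ →₀ S} (hf : f 0 ≠ 0)
    (h : skewMul σ (Finsupp.single e 1) p = skewMul σ q f) : ∃ q', p = skewMul σ q' f := by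
  induction e generalizing q with
  | zero => exact ⟨q, by rwa [one_skewMul] at h⟩
  | succ e ih =>
    have hq0 : q 0 = 0 := by simpa [skewMul_apply, hf] using (congrArg (· 0) h).symm
    obtain ⟨q', rfl⟩ := exists_eq_single_one_skewMul σ hq0
    have hx : Finsupp.single (e + 1) (1 : S) =
        skewMul σ (Finsupp.single 1 1) (Finsupp.single e 1) := by
      rw [single_skewMul_single, map_one, mul_one, add_comm]
    rw [hx, skewMul_assoc, skewMul_assoc] at h
    exact ih (skewMul_left_cancel₀ σ (by simp) h)

end Degree

theorem skewMul_eq_X_pow_sub_C_of_skewMul_eq {S : Type} [CommRing S] [IsDomain S]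
    (σ : RingAut S) {n : ℕ} {lam : S} (hσn : σ ^ n = 1) (hlam : σ lam = lam) {f h : ℕ →₀ S}
    (hh : h ≠ 0) (hhf : skewMul σ h f = Finsupp.single n 1 - Finsupp.single 0 lam) :
    skewMul σ f h = Finsupp.single n 1 - Finsupp.single 0 lam :=
  skewMul_left_cancel₀ σ hh (by rw [← skewMul_assoc, hhf, skewMul_X_pow_sub_C_comm σ hσn hlam])

section Reciprocal

variable {S : Type} [Ring S] (σ : RingAut S)

theorem skewRecip_apply (k : ℕ) (h : ℕ →₀ S) (s : ℕ) :
    skewRecip σ k h s = if s ≤ k then (σ ^ s) (h (k - s)) else 0 := by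
  simp [skewRecip, Finsupp.finsetSum_apply, Finsupp.single_apply]

theorem skewRecip_apply_of_lt {k j : ℕ} (h : ℕ →₀ S) (hj : k < j) : skewRecip σ k h j = 0 := by
  rw [skewRecip_apply, if_neg (by omega)]

theorem skewRecip_eq_single_skewMul {k m : ℕ} {h : ℕ →₀ S} (hm : m ≤ k)
    (hh : ∀ j, m < j → h j = 0) :
    skewRecip σ k h = skewMul σ (Finsupp.single (k - m) 1) (skewRecip σ m h) := by
  ext t
  rw [single_skewMul_apply, skewRecip_apply, skewRecip_apply]
  by_cases htk : t ≤ k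
  · by_cases hkt : k - m ≤ t
    · rw [if_pos htk, if_pos hkt, if_pos (by omega), one_mul, ← RingAut.mul_apply, ← pow_add,
        Nat.add_sub_cancel' hkt, show m - (t - (k - m)) = k - t by omega]
    · rw [if_pos htk, if_neg hkt, hh (k - t) (by omega), map_zero]
  · rw [if_neg htk, if_pos (by omega), if_neg (by omega), map_zero, mul_zero]

theorem single_skewMul_skewRecip_apply {m : ℕ} {h : ℕ →₀ S} (hh : ∀ j, m < j → h j = 0)
    (i : ℕ) (a : S) (t : ℕ) :
    skewMul σ (Finsupp.single i a) (skewRecip σ m h) t =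
      if t ≤ m + i then a * (σ ^ t) (h (m + i - t)) else 0 := by
  rw [single_skewMul_apply, skewRecip_apply]
  by_cases htm : t ≤ m + i
  · by_cases hit : i ≤ t
    · rw [if_pos hit, if_pos (by omega), if_pos htm, ← RingAut.mul_apply, ← pow_add,
        Nat.add_sub_cancel' hit, show m - (t - i) = m + i - t by omega]
    · rw [if_neg hit, if_pos htm, hh (m + i - t) (by omega), map_zero, mul_zero]
  · rw [if_pos (by omega), if_neg (by omega), if_neg htm, map_zero, mul_zero]

end Reciprocal

theorem exists_skewMul_eq_skewRecip_skewMul_iff {S : Type} [Ring S] [IsDomain S]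
    (σ : RingAut S) {f h : ℕ →₀ S} {k m : ℕ} (hh : ∀ j, m < j → h j = 0) (hh0 : h ≠ 0)
    (hf0 : f 0 ≠ 0) (hmk : m ≤ k) :
    (∃ q, skewMul σ q (skewMul σ f h) = skewMul σ (skewRecip σ k h) h) ↔
      ∃ q, skewRecip σ m h = skewMul σ q f := by
  calc _ ↔ ∃ q, skewRecip σ k h = skewMul σ q f := exists_congr fun q =>
        ⟨fun e => (skewMul_right_cancel₀ σ hh0 (by rw [skewMul_assoc, e])).symm,
          fun e => by rw [e, skewMul_assoc]⟩
    _ ↔ _ := by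
      rw [skewRecip_eq_single_skewMul σ hmk hh]
      exact ⟨fun ⟨_, e⟩ => exists_eq_skewMul_of_single_skewMul_eq σ hf0 e,
        fun ⟨_, e⟩ => ⟨_, by rw [e, ← skewMul_assoc]⟩⟩

section Orthogonality

variable {S : Type} [CommRing S] (σ : RingAut S)

theorem sum_single_skewMul_skewRecip_mul {f h : ℕ →₀ S} {n m i j : ℕ}
    (hh : ∀ s, m < s → h s = 0) (hi : m + i < n) (hj : j ≤ m + i) (a b : S) :
    ∑ t ∈ Finset.range n,
        skewMul σ (Finsupp.single i a) (skewRecip σ m h) t * skewMul σ (Finsupp.single j b) f t =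
      a * b * (σ ^ j) (skewMul σ f h (m + i - j)) := by
  have hsub : Finset.Ico j (m + i + 1) ⊆ Finset.range n := by
    intro t
    simp only [Finset.mem_Ico, Finset.mem_range]
    omega
  rw [← Finset.sum_subset hsub fun t _ ht => ?_]
  · rw [Finset.sum_Ico_eq_sum_range, skewMul_apply, map_sum, Finset.mul_sum,
      show m + i + 1 - j = m + i - j + 1 by omega]
    refine Finset.sum_congr rfl fun v hv => ?_
    rw [Finset.mem_range] at hv
    rw [single_skewMul_skewRecip_apply σ hh, single_skewMul_apply, if_pos (by omega),
      if_pos (by omega), map_mul, ← RingAut.mul_apply, ← pow_add, Nat.add_sub_cancel_left,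
      show m + i - (j + v) = m + i - j - v by omega]
    ring
  · rw [Finset.mem_Ico, not_and_or, not_le, not_lt] at ht
    rw [single_skewMul_skewRecip_apply σ hh, single_skewMul_apply]
    rcases ht with ht | ht
    · rw [if_neg (show ¬j ≤ t by omega), mul_zero]
    · rw [if_neg (show ¬t ≤ m + i by omega), zero_mul]

end Orthogonality

section Codes

variable {S : Type}

theorem toPoly_apply [Semiring S] {n : ℕ} (c : Fin n → S) (i : Fin n) : toPoly c i = c i := by
  simp [toPoly, Finsupp.finsetSum_apply, Finsupp.single_apply, Fin.val_inj]

theorem toPoly_apply_of_le [Semiring S] {n : ℕ} (c : Fin n → S) {j : ℕ} (hj : n ≤ j) :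
    toPoly c j = 0 := by
  simp only [toPoly, Finsupp.finsetSum_apply, Finsupp.single_apply]
  exact Finset.sum_eq_zero fun i _ => if_neg (by omega)

theorem toPoly_restrict [Semiring S] {n : ℕ} {p : ℕ →₀ S} (hp : ∀ j, n ≤ j → p j = 0) :
    toPoly (fun i : Fin n => p i) = p := by
  ext j
  by_cases hj : j < n
  · exact toPoly_apply (fun i : Fin n => p i) ⟨j, hj⟩
  · rw [toPoly_apply_of_le _ (not_lt.mp hj), hp j (not_lt.mp hj)]

theorem toPoly_injective [Semiring S] {n : ℕ} :
    Function.Injective (toPoly : (Fin n → S) → ℕ →₀ S) := fun c c' h =>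
  funext fun i => by rw [← toPoly_apply c, h, toPoly_apply]

theorem toPoly_add [Semiring S] {n : ℕ} (c c' : Fin n → S) :
    toPoly (c + c') = toPoly c + toPoly c' := by
  simp [toPoly, Finset.sum_add_distrib]

theorem toPoly_smul [Semiring S] {n : ℕ} (a : S) (c : Fin n → S) :
    toPoly (a • c) = a • toPoly c := by
  simp [toPoly, Finset.smul_sum]

def skewCode [Ring S] (σ : RingAut S) (n : ℕ) (g : ℕ →₀ S) : Set (Fin n → S) :=
  {c | ∃ q, toPoly c = skewMul σ q g}

end Codes

theorem skewCode_subset_skewCode_iff {S : Type} [Ring S] (σ : RingAut S) {n : ℕ}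
    {f H : ℕ →₀ S} (hH : ∀ j, n ≤ j → H j = 0) :
    skewCode σ n H ⊆ skewCode σ n f ↔ ∃ q, H = skewMul σ q f := by
  constructor
  · intro hsub
    obtain ⟨q, hq⟩ := hsub (show (fun i : Fin n => H i) ∈ skewCode σ n H from
      ⟨Finsupp.single 0 1, by rw [toPoly_restrict hH, one_skewMul]⟩)
    exact ⟨q, by rwa [toPoly_restrict hH] at hq⟩
  · rintro ⟨q, rfl⟩ c ⟨p, hp⟩
    exact ⟨skewMul σ p q, by rw [hp, skewMul_assoc]⟩

theorem skewCode_subset_skewCode_iff_of_monic {S : Type} [Ring S] (σ : RingAut S)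
    {f H : ℕ →₀ S} {n m d : ℕ} (hf : ∀ j, d < j → f j = 0) (hfd : f d = 1)
    (hH : ∀ j, m < j → H j = 0) (hmd : m + d = n) :
    skewCode σ n H ⊆ skewCode σ n f ↔ ∃ q, H = skewMul σ q f := by
  rcases Nat.eq_zero_or_pos d with rfl | hd
  -- for `d = 0` the generator `H` has degree `n`, so it is no codeword, but then `f = 1`
  · obtain rfl : f = Finsupp.single 0 1 := by
      ext (_ | j)
      · simp [hfd]
      · simp [hf (j + 1) (by omega)]
    exact iff_of_true (fun c _ => ⟨toPoly c, (skewMul_one σ _).symm⟩) ⟨H, (skewMul_one σ H).symm⟩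
  · exact skewCode_subset_skewCode_iff σ fun j hj => hH j (by omega)

section Encoding

variable {S : Type} [CommRing S] (σ : RingAut S)

noncomputable def skewEncode (g : ℕ →₀ S) (M n : ℕ) : (Fin M → S) →ₗ[S] (Fin n → S) where
  toFun q t := skewMul σ (toPoly q) g t
  map_add' q q' := by
    ext t
    simp [toPoly_add, add_skewMul]
  map_smul' a q := by
    ext t
    simp [toPoly_smul, smul_skewMul]

theorem skewEncode_apply (g : ℕ →₀ S) (M n : ℕ) (q : Fin M → S) (t : Fin n) :
    skewEncode σ g M n q t = skewMul σ (toPoly q) g t := rfl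

theorem toPoly_skewEncode {g : ℕ →₀ S} {M n D : ℕ} (hg : ∀ j, D < j → g j = 0)
    (hMD : M + D ≤ n) (q : Fin M → S) :
    toPoly (skewEncode σ g M n q) = skewMul σ (toPoly q) g :=
  toPoly_restrict fun _ hj =>
    skewMul_apply_eq_zero σ (fun _ => toPoly_apply_of_le q) hg (hMD.trans hj)

theorem coe_range_skewEncode [IsDomain S] {g : ℕ →₀ S} {M n D : ℕ}
    (hg : ∀ j, D < j → g j = 0) (hgD : g D ≠ 0) (hMD : M + D = n) :
    (LinearMap.range (skewEncode σ g M n) : Set (Fin n → S)) = skewCode σ n g := by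
  ext c
  constructor
  · rintro ⟨q, rfl⟩
    exact ⟨toPoly q, toPoly_skewEncode σ hg hMD.le q⟩
  · rintro ⟨Q, hQ⟩
    have hQM : ∀ j, M ≤ j → Q j = 0 := by
      intro j hj
      by_contra hQj
      have hQ0 : Q ≠ 0 := fun h => hQj (by rw [h, Finsupp.zero_apply])
      have hjQ := le_natDeg_of_ne_zero hQj
      refine skewMul_apply_natDeg_add_ne_zero σ hQ0 hg hgD ?_
      rw [← hQ, toPoly_apply_of_le c (by omega)]
    refine ⟨fun i => Q i, funext fun t => ?_⟩
    rw [skewEncode_apply, toPoly_restrict hQM, ← hQ, toPoly_apply]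

end Encoding

theorem finrank_range_skewEncode {F : Type} [Field F] (Θ : RingAut F) {g : ℕ →₀ F} {M n D : ℕ}
    (hg : ∀ j, D < j → g j = 0) (hg0 : g ≠ 0) (hMD : M + D ≤ n) :
    Module.finrank F (LinearMap.range (skewEncode Θ g M n)) = M := by
  rw [LinearMap.finrank_range_of_inj, Module.finrank_fin_fun]
  intro q q' h
  refine toPoly_injective (skewMul_right_cancel₀ Θ hg0 ?_)
  rw [← toPoly_skewEncode Θ hg hMD, h, toPoly_skewEncode Θ hg hMD]

theorem dualSet_eq_of_orthogonal {ι F : Type} [Fintype ι] [Field F] {W V : Submodule F (ι → F)}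
    (hVW : ∀ v ∈ V, ∀ w ∈ W, ∑ t, v t * w t = 0)
    (hdim : Module.finrank F W + Module.finrank F V = Fintype.card ι) :
    dualSet (W : Set (ι → F)) = V := by
  classical
  set B := Matrix.toBilin' (1 : Matrix ι ι F)
  have hB : ∀ v w, B w v = ∑ t, v t * w t := fun v w => by
    simp [B, Matrix.toBilin'_apply', dotProduct, mul_comm]
  have hBnd : B.Nondegenerate :=
    Matrix.nondegenerate_toBilin'_iff.mpr (Matrix.nondegenerate_of_det_ne_zero (by simp))
  have hVB : V ≤ B.orthogonal W := fun v hv =>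
    LinearMap.BilinForm.mem_orthogonal_iff.mpr fun w hw => (hB v w).trans (hVW v hv w hw)
  have hVeq : V = B.orthogonal W := Submodule.eq_of_le_of_finrank_le hVB (by
    rw [LinearMap.BilinForm.finrank_orthogonal hBnd, Module.finrank_fintype_fun_eq_card]
    omega)
  ext v
  simp only [dualSet, SetLike.mem_coe, hVeq, LinearMap.BilinForm.mem_orthogonal_iff, hB]
  rfl

theorem sum_skewEncode_skewRecip_mul_skewEncode {S : Type} [CommRing S] (σ : RingAut S)
    {f h : ℕ →₀ S} {n m d : ℕ} (hh : ∀ s, m < s → h s = 0) (hmd : m + d = n)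
    (hfh : ∀ c, 0 < c → c < n → skewMul σ f h c = 0) (p : Fin d → S) (q : Fin m → S) :
    ∑ t, skewEncode σ (skewRecip σ m h) d n p t * skewEncode σ f m n q t = 0 := by
  simp only [skewEncode_apply, toPoly, sum_skewMul, Finsupp.finsetSum_apply, Finset.sum_mul_sum]
  rw [Fin.sum_univ_eq_sum_range (fun t => ∑ i : Fin d, ∑ j : Fin m,
    skewMul σ (Finsupp.single i (p i)) (skewRecip σ m h) t *
      skewMul σ (Finsupp.single j (q j)) f t), Finset.sum_comm]
  refine Finset.sum_eq_zero fun i _ => ?_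
  rw [Finset.sum_comm]
  refine Finset.sum_eq_zero fun j _ => ?_
  rw [sum_single_skewMul_skewRecip_mul σ hh (by omega) (by omega),
    hfh _ (by omega) (by omega), map_zero, mul_zero]

theorem dualSet_skewCode {F : Type} [Field F] (Θ : RingAut F) {f h : ℕ →₀ F} {n m d : ℕ}
    (hf : ∀ j, d < j → f j = 0) (hfd : f d ≠ 0) (hh : ∀ j, m < j → h j = 0) (hh0 : h 0 ≠ 0)
    (hmd : m + d = n) (hfh : ∀ c, 0 < c → c < n → skewMul Θ f h c = 0) :
    dualSet (skewCode Θ n f) = skewCode Θ n (skewRecip Θ m h) := by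
  have hH : ∀ j, m < j → skewRecip Θ m h j = 0 := fun _ => skewRecip_apply_of_lt Θ h
  have hHm : skewRecip Θ m h m ≠ 0 := by
    rw [skewRecip_apply, if_pos le_rfl, Nat.sub_self]
    exact (map_ne_zero_iff _ (Θ ^ m).injective).mpr hh0
  rw [← coe_range_skewEncode Θ hf hfd (M := m) hmd,
    ← coe_range_skewEncode Θ hH hHm (M := d) (by omega)]
  refine dualSet_eq_of_orthogonal ?_ ?_
  · rintro _ ⟨p, rfl⟩ _ ⟨q, rfl⟩
    exact sum_skewEncode_skewRecip_mul_skewEncode Θ hh hmd hfh p q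
  · rw [finrank_range_skewEncode Θ hf (fun h0 => hfd (by rw [h0, Finsupp.zero_apply])) hmd.le,
      finrank_range_skewEncode Θ hH (fun h0 => hHm (by rw [h0, Finsupp.zero_apply])) (by omega),
      Fintype.card_fin, hmd]

theorem stmt15_general (F : Type) [Field F] (n : ℕ) [NeZero n]
    (Θ : RingAut F) (hord : orderOf Θ ∣ n)
    (lam : F) (hlam : lam = 1 ∨ lam = -1)
    (f h : ℕ →₀ F) (k : ℕ) (hk : ∀ j, k < j → h j = 0)
    (hmon : IsMonicPoly f)
    (hdiv : skewMul Θ h f = Finsupp.single n 1 - Finsupp.single 0 lam)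
    (A : Set (Fin n → F))
    (hA : ∀ c : Fin n → F, c ∈ A ↔ ∃ q, toPoly c = skewMul Θ q f) :
    dualSet A ⊆ A ↔
      ∃ q : ℕ →₀ F, skewMul Θ q (Finsupp.single n 1 - Finsupp.single 0 lam) =
        skewMul Θ (skewRecip Θ k h) h := by
  obtain ⟨d, hfd, hf⟩ := hmon
  have hn : n ≠ 0 := NeZero.ne n
  obtain ⟨hlam0, hΘlam⟩ : lam ≠ 0 ∧ Θ lam = lam := by rcases hlam with rfl | rfl <;> simp
  have hh0f0 : h 0 * f 0 = -lam := by simpa [skewMul_apply, hn] using congrArg (· 0) hdiv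
  have hh0 : h 0 ≠ 0 := left_ne_zero_of_mul (hh0f0 ▸ neg_ne_zero.mpr hlam0)
  have hf0 : f 0 ≠ 0 := right_ne_zero_of_mul (hh0f0 ▸ neg_ne_zero.mpr hlam0)
  have hhne : h ≠ 0 := fun e => hh0 (by rw [e, Finsupp.zero_apply])
  have hmd : natDeg h + d = n := by
    rw [← natDeg_X_pow_sub_C hn lam, ← hdiv,
      natDeg_skewMul Θ hhne fun e => hf0 (by rw [e, Finsupp.zero_apply]),
      natDeg_eq_of_apply_ne_zero hf (by simp [hfd])]
  have hfh := skewMul_eq_X_pow_sub_C_of_skewMul_eq Θ (orderOf_dvd_iff_pow_eq_one.mp hord) hΘlam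
    hhne hdiv
  rw [show A = skewCode Θ n f from Set.ext hA,
    dualSet_skewCode Θ hf (by simp [hfd]) (fun _ => apply_eq_zero_of_natDeg_lt) hh0 hmd
      (fun c hc0 hcn => by simp [hfh, hc0.ne', hcn.ne]),
    ← hfh, exists_skewMul_eq_skewRecip_skewMul_iff Θ (fun _ => apply_eq_zero_of_natDeg_lt) hhne
      hf0 (natDeg_le_iff.mpr hk)]
  exact skewCode_subset_skewCode_iff_of_monic Θ hf hfd (fun _ => skewRecip_apply_of_lt Θ h) hmd

theorem stmt15 (F : Type) [Field F] [Fintype F] (n : ℕ) [NeZero n]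
    (Θ : RingAut F) (hord : orderOf Θ ∣ n)
    (lam : F) (hlam : lam = 1 ∨ lam = -1)
    (f h : ℕ →₀ F) (k : ℕ) (hk : ∀ j, k < j → h j = 0)
    (hmon : IsMonicPoly f)
    (hdiv : skewMul Θ h f = Finsupp.single n 1 - Finsupp.single 0 lam)
    (A : Set (Fin n → F))
    (hA : ∀ c : Fin n → F, c ∈ A ↔ ∃ q, toPoly c = skewMul Θ q f) :
    dualSet A ⊆ A ↔
      ∃ q : ℕ →₀ F, skewMul Θ q (Finsupp.single n 1 - Finsupp.single 0 lam) =
        skewMul Θ (skewRecip Θ k h) h :=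
  stmt15_general F n Θ hord lam hlam f h k hk hmon hdiv A hA
end
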